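/- arXiv:1406.1635 — 3 statements merged into one kernel-verified Lean document; each statement's English description precedes it below -/
import Mathlib

section
/- There exists an absolute constant C > 0 (one may take C = 4) with the following property. Let (X, μ) be a measure space, let c₀ > 0, and let v : X → ℝ be a measurable function such that ‖v‖_{L^p(μ)} ≤ c₀ · p^{1/2} for every p ∈ [2, ∞). Then for every ξ ∈ L¹(μ) ∩ L²(μ) one has ∫ |ξ v| dμ ≤ C · c₀ · (1 + ‖ξ‖_{L¹(μ)} · (log(e + ‖ξ‖_{L²(μ)}))^{1/2}). -/
/-!
Write `|ξ v| = |ξ|^(1 - 2/p) · (|ξ|²)^(1/p) · (|v|^p)^(1/p)`; Hölder's inequality with these three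
weights gives `∫ |ξ v| ≤ ‖ξ‖₁^(1 - 2/p) ‖ξ‖₂^(2/p) ‖v‖_p ≤ c₀ √p · ‖ξ‖₁ (‖ξ‖₂/‖ξ‖₁)^(2/p)`.
Taking `p = 2 log (e + ‖ξ‖₂/‖ξ‖₁)` makes `(‖ξ‖₂/‖ξ‖₁)^(2/p) ≤ e`, so the integral is at most
`√2 e c₀ ‖ξ‖₁ log^(1/2) (e + ‖ξ‖₂/‖ξ‖₁)`. When `‖ξ‖₁ < 1` this logarithm exceeds `log (e + ‖ξ‖₂)`
by at most `log (1/‖ξ‖₁)`, an excess absorbed by `a √(log (1/a)) ≤ 1`; finally `√2 e ≤ 4`.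
-/

open MeasureTheory
open scoped ENNReal

namespace Real

theorem sqrt_add_le_add_sqrt {x y : ℝ} (hx : 0 ≤ x) (hy : 0 ≤ y) : √(x + y) ≤ √x + √y := by
  simpa only [sqrt_eq_rpow] using rpow_add_le_add_rpow hx hy (by norm_num) (by norm_num)

theorem mul_sqrt_neg_log_le_one {a : ℝ} (ha : 0 < a) (ha₁ : a ≤ 1) : a * √(-log a) ≤ 1 := by
  have h := abs_log_mul_self_lt (a ^ 2) (by positivity) (pow_le_one₀ ha.le ha₁)
  rw [log_pow, abs_lt] at h
  have hsq : (a * √(-log a)) ^ 2 = a ^ 2 * -log a := by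
    rw [mul_pow, sq_sqrt (neg_nonneg.mpr (log_nonpos ha.le ha₁))]
  rw [← pow_le_one_iff_of_nonneg (by positivity) two_ne_zero, hsq]
  push_cast at h
  linarith [h.1]

theorem rpow_inv_log_exp_one_add_le {x : ℝ} (hx : 0 ≤ x) : x ^ (log (exp 1 + x))⁻¹ ≤ exp 1 := by
  have hlog : 0 < log (exp 1 + x) := log_pos (by linarith [add_one_lt_exp one_ne_zero])
  calc x ^ (log (exp 1 + x))⁻¹ ≤ (exp 1 + x) ^ (log (exp 1 + x))⁻¹ := by
        gcongr
        linarith [exp_pos 1]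
    _ = exp 1 := by rw [rpow_def_of_pos (by positivity), mul_inv_cancel₀ hlog.ne']

theorem mul_sqrt_log_exp_one_add_div_le {a b : ℝ} (ha : 0 < a) (hb : 0 ≤ b) :
    a * √(log (exp 1 + b / a)) ≤ 1 + a * √(log (exp 1 + b)) := by
  have hL : 0 ≤ log (exp 1 + b) := log_nonneg (by linarith [add_one_le_exp 1])
  rcases le_or_gt 1 a with ha₁ | ha₁
  · have hlog : log (exp 1 + b / a) ≤ log (exp 1 + b) := by
      gcongr
      exact div_le_self hb ha₁
    nlinarith [sqrt_le_sqrt hlog, sqrt_nonneg (log (exp 1 + b))]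
  · have hlog : log (exp 1 + b / a) ≤ log (exp 1 + b) + -log a := by
      rw [← log_inv, ← log_mul (by positivity) (by positivity)]
      gcongr
      rw [← div_eq_mul_inv, add_div]
      gcongr
      exact le_div_self (exp_pos 1).le ha ha₁.le
    calc a * √(log (exp 1 + b / a)) ≤ a * (√(log (exp 1 + b)) + √(-log a)) := by
          gcongr
          exact (sqrt_le_sqrt hlog).trans
            (sqrt_add_le_add_sqrt hL (neg_nonneg.mpr (log_nonpos ha.le ha₁.le)))
      _ ≤ 1 + a * √(log (exp 1 + b)) := by
          linarith [mul_sqrt_neg_log_le_one ha ha₁.le]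

theorem rpow_one_sub_inv_log_mul_rpow_inv_log_le {a b : ℝ} (ha : 0 < a) (hb : 0 ≤ b) :
    a ^ (1 - (log (exp 1 + b / a))⁻¹) * b ^ (log (exp 1 + b / a))⁻¹ ≤ exp 1 * a := by
  calc a ^ (1 - (log (exp 1 + b / a))⁻¹) * b ^ (log (exp 1 + b / a))⁻¹
      = a * (b / a) ^ (log (exp 1 + b / a))⁻¹ := by
        rw [rpow_sub ha, rpow_one, div_rpow hb ha.le]
        field_simp
    _ ≤ a * exp 1 := by gcongr; exact rpow_inv_log_exp_one_add_le (by positivity)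
    _ = exp 1 * a := mul_comm _ _

theorem sqrt_two_mul_exp_one_le_four : √2 * exp 1 ≤ 4 := by
  nlinarith [sq_sqrt (zero_le_two (α := ℝ)), sqrt_nonneg 2, exp_pos 1, exp_one_lt_d9]

end Real

theorem ENNReal.lintegral_mul_rpow_le_three {α : Type*} [MeasurableSpace α] {μ : Measure α}
    {f g h : α → ℝ≥0∞} (hf : AEMeasurable f μ) (hg : AEMeasurable g μ) (hh : AEMeasurable h μ)
    {p q r : ℝ} (hp : 0 ≤ p) (hq : 0 ≤ q) (hr : 0 ≤ r) (hpqr : p + q + r = 1) :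
    ∫⁻ a, f a ^ p * g a ^ q * h a ^ r ∂μ ≤
      (∫⁻ a, f a ∂μ) ^ p * (∫⁻ a, g a ∂μ) ^ q * (∫⁻ a, h a ∂μ) ^ r := by
  simpa [Fin.prod_univ_three] using
    ENNReal.lintegral_prod_norm_pow_le Finset.univ (f := ![f, g, h]) (p := ![p, q, r])
      (by simp [Fin.forall_fin_succ, hf, hg, hh]) (by simpa [Fin.sum_univ_three] using hpqr)
      (by simp [Fin.forall_fin_succ, hp, hq, hr])

namespace MeasureTheory

variable {α E F : Type*} [MeasurableSpace α] {μ : Measure α}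
  [NormedAddCommGroup E] [NormedAddCommGroup F]

theorem lintegral_enorm_mul_le_eLpNorm_one_two {ξ : α → E} {v : α → F}
    (hξ : AEStronglyMeasurable ξ μ) (hv : AEStronglyMeasurable v μ) {p : ℝ} (hp : 2 ≤ p) :
    ∫⁻ x, ‖ξ x‖ₑ * ‖v x‖ₑ ∂μ ≤
      eLpNorm ξ 1 μ ^ (1 - 2 / p) * eLpNorm ξ 2 μ ^ (2 / p) *
        eLpNorm v (ENNReal.ofReal p) μ := by
  have hp0 : 0 < p := by linarith
  have hexp : 0 ≤ 1 - 2 / p := by rw [sub_nonneg, div_le_one hp0]; exact hp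
  have hsplit : ∀ x, ‖ξ x‖ₑ * ‖v x‖ₑ =
      ‖ξ x‖ₑ ^ (1 - 2 / p) * (‖ξ x‖ₑ ^ (2 : ℝ)) ^ (1 / p) * (‖v x‖ₑ ^ p) ^ (1 / p) := by
    intro x
    rw [← ENNReal.rpow_mul, ← ENNReal.rpow_mul, mul_one_div_cancel hp0.ne', ENNReal.rpow_one,
      ← ENNReal.rpow_add_of_nonneg _ _ hexp (by positivity),
      show 1 - 2 / p + 2 * (1 / p) = 1 by ring, ENNReal.rpow_one]
  have hξ2 : eLpNorm ξ 2 μ ^ (2 / p) = (∫⁻ x, ‖ξ x‖ₑ ^ (2 : ℝ) ∂μ) ^ (1 / p) := by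
    rw [eLpNorm_eq_lintegral_rpow_enorm_toReal two_ne_zero ENNReal.ofNat_ne_top,
      ← ENNReal.rpow_mul, ENNReal.toReal_ofNat]
    congr 1
    field_simp
  have hvp : eLpNorm v (ENNReal.ofReal p) μ = (∫⁻ x, ‖v x‖ₑ ^ p ∂μ) ^ (1 / p) := by
    rw [eLpNorm_eq_lintegral_rpow_enorm_toReal (by simpa using hp0) ENNReal.ofReal_ne_top,
      ENNReal.toReal_ofReal hp0.le]
  simp_rw [hsplit]
  rw [eLpNorm_one_eq_lintegral_enorm, hξ2, hvp]
  exact ENNReal.lintegral_mul_rpow_le_three hξ.enorm (hξ.enorm.pow_const _)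
    (hv.enorm.pow_const _) hexp (by positivity) (by positivity) (by ring)

theorem integral_norm_mul_norm_le_eLpNorm_one_two {ξ : α → E} {v : α → F} {p : ℝ} (hp : 2 ≤ p)
    (hξ₁ : MemLp ξ 1 μ) (hξ₂ : MemLp ξ 2 μ) (hv : MemLp v (ENNReal.ofReal p) μ) :
    ∫ x, ‖ξ x‖ * ‖v x‖ ∂μ ≤
      (eLpNorm ξ 1 μ).toReal ^ (1 - 2 / p) * (eLpNorm ξ 2 μ).toReal ^ (2 / p) *
        (eLpNorm v (ENNReal.ofReal p) μ).toReal := by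
  have hp0 : 0 < p := by linarith
  have hexp : 0 ≤ 1 - 2 / p := by rw [sub_nonneg, div_le_one hp0]; exact hp
  have hfin : eLpNorm ξ 1 μ ^ (1 - 2 / p) * eLpNorm ξ 2 μ ^ (2 / p) *
      eLpNorm v (ENNReal.ofReal p) μ ≠ ∞ :=
    ENNReal.mul_ne_top
      (ENNReal.mul_ne_top (ENNReal.rpow_ne_top_of_nonneg hexp hξ₁.eLpNorm_ne_top)
        (ENNReal.rpow_ne_top_of_nonneg (by positivity) hξ₂.eLpNorm_ne_top))
      hv.eLpNorm_ne_top
  have hmeas : AEStronglyMeasurable (fun x => ‖ξ x‖ * ‖v x‖) μ := hξ₁.1.norm.mul hv.1.norm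
  rw [integral_eq_lintegral_of_nonneg_ae (ae_of_all _ fun x => by positivity) hmeas]
  simp_rw [ENNReal.ofReal_mul (norm_nonneg _), ofReal_norm]
  refine (ENNReal.toReal_mono hfin
    (lintegral_enorm_mul_le_eLpNorm_one_two hξ₁.1 hv.1 hp)).trans_eq ?_
  rw [ENNReal.toReal_mul, ENNReal.toReal_mul, ENNReal.toReal_rpow, ENNReal.toReal_rpow]

end MeasureTheory

open Real

/-- There exists an absolute constant `C > 0` (one may take `C = 4`) such that:
for any measure space `(X, μ)`, any `c₀ > 0` and any measurable `v : X → ℝ` with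
`‖v‖_{L^p(μ)} ≤ c₀ p^{1/2}` for every `p ∈ [2, ∞)`, and any `ξ ∈ L¹(μ) ∩ L²(μ)`,
one has `∫ |ξ v| dμ ≤ C c₀ (1 + ‖ξ‖_{L¹} (log (e + ‖ξ‖_{L²}))^{1/2})`. -/
theorem stmt0 :
    ∃ C : ℝ, 0 < C ∧ C = 4 ∧
      ∀ (X : Type) [MeasurableSpace X] (μ : Measure X) (c₀ : ℝ), 0 < c₀ →
        ∀ v : X → ℝ, Measurable v →
          (∀ p : ℝ, 2 ≤ p →
            eLpNorm v (ENNReal.ofReal p) μ ≤ ENNReal.ofReal (c₀ * p ^ ((1 : ℝ)/2))) →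
        ∀ ξ : X → ℝ, MemLp ξ 1 μ → MemLp ξ 2 μ →
          ∫ x, |ξ x * v x| ∂μ ≤
            C * c₀ * (1 + (eLpNorm ξ 1 μ).toReal *
              (Real.log (Real.exp 1 + (eLpNorm ξ 2 μ).toReal)) ^ ((1 : ℝ)/2)) := by
  refine ⟨4, by norm_num, rfl, fun X _ μ c₀ hc₀ v hv hvp ξ hξ₁ hξ₂ => ?_⟩
  set a := (eLpNorm ξ 1 μ).toReal
  set b := (eLpNorm ξ 2 μ).toReal
  have hb : 0 ≤ b := ENNReal.toReal_nonneg
  simp_rw [← sqrt_eq_rpow, abs_mul, ← Real.norm_eq_abs] at hvp ⊢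
  rcases (ENNReal.toReal_nonneg : 0 ≤ a).eq_or_lt with ha | ha
  · have hξ : ξ =ᵐ[μ] 0 := (eLpNorm_eq_zero_iff hξ₁.1 one_ne_zero).mp
      (((ENNReal.toReal_eq_zero_iff _).mp ha.symm).resolve_right hξ₁.eLpNorm_ne_top)
    calc ∫ x, ‖ξ x‖ * ‖v x‖ ∂μ = 0 := integral_eq_zero_of_ae (by
          filter_upwards [hξ] with x hx
          simp [hx])
      _ ≤ _ := by positivity
  set ℓ := log (exp 1 + b / a)
  have hℓ : 1 ≤ ℓ := by rw [le_log_iff_exp_le (by positivity)]; linarith [div_nonneg hb ha.le]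
  have hp : 2 ≤ 2 * ℓ := by linarith
  have hv₂ℓ : MemLp v (ENNReal.ofReal (2 * ℓ)) μ :=
    ⟨hv.aestronglyMeasurable, (hvp _ hp).trans_lt ENNReal.ofReal_lt_top⟩
  have hθ : 2 / (2 * ℓ) = ℓ⁻¹ := by field_simp
  calc ∫ x, ‖ξ x‖ * ‖v x‖ ∂μ
      ≤ a ^ (1 - ℓ⁻¹) * b ^ ℓ⁻¹ * (c₀ * √(2 * ℓ)) := by
        rw [← hθ]
        refine (integral_norm_mul_norm_le_eLpNorm_one_two hp hξ₁ hξ₂ hv₂ℓ).trans ?_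
        gcongr
        exact ENNReal.toReal_le_of_le_ofReal (by positivity) (hvp _ hp)
    _ ≤ exp 1 * a * (c₀ * (√2 * √ℓ)) := by
        rw [sqrt_mul zero_le_two]
        exact mul_le_mul_of_nonneg_right (rpow_one_sub_inv_log_mul_rpow_inv_log_le ha hb)
          (by positivity)
    _ = (√2 * exp 1) * c₀ * (a * √ℓ) := by ring
    _ ≤ 4 * c₀ * (1 + a * √(log (exp 1 + b))) := by
        gcongr
        · exact sqrt_two_mul_exp_one_le_four
        · exact mul_sqrt_log_exp_one_add_div_le ha hb
end

section
/- Let c ≥ 0, A > 0, B > 0 and X ≥ 0 be real numbers such that X ≤ c · p^{1/2} · A^{(p−2)/p} · B^{2/p} for every p ∈ [2, ∞). Then X ≤ 2 · e^{1/2} · c · A · (log(e + B/A))^{1/2}. -/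
/-! Choose `p = 4 log (e + B/A)`. Then `p^{1/2} = 2 (log (e + B/A))^{1/2}`, and
`A^{(p-2)/p} B^{2/p} = A (B/A)^{2/p} ≤ A e^{1/2}` because `B/A ≤ e + B/A = exp (p/4)`. -/

open Real

theorem Real.rpow_one_sub_mul_rpow {A B : ℝ} (hA : 0 < A) (hB : 0 ≤ B) (θ : ℝ) :
    A ^ (1 - θ) * B ^ θ = A * (B / A) ^ θ := by
  rw [rpow_sub hA, rpow_one, div_rpow hB hA.le]
  ring

theorem Real.rpow_le_exp_mul_of_le_exp {x L t : ℝ} (hx : 0 ≤ x) (hxL : x ≤ exp L) (ht : 0 ≤ t) :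
    x ^ t ≤ exp (L * t) :=
  (rpow_le_rpow hx hxL ht).trans_eq (exp_mul L t).symm

theorem Real.one_le_log_exp_one_add {y : ℝ} (hy : 0 ≤ y) : 1 ≤ log (exp 1 + y) :=
  (log_exp 1).symm.trans_le (log_le_log (exp_pos 1) (by linarith))

theorem Real.rpow_half_four_mul {L : ℝ} (hL : 0 ≤ L) : (4 * L) ^ (1 / 2 : ℝ) = 2 * L ^ (1 / 2 : ℝ) := by
  rw [mul_rpow (by norm_num) hL, show (4 : ℝ) = 2 ^ (2 : ℝ) by norm_num, ← rpow_mul (by norm_num)]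
  norm_num

theorem stmt1_general (c A B X : ℝ) (hc : 0 ≤ c) (hA : 0 < A) (hB : 0 < B)
    (h : ∀ p : ℝ, 2 ≤ p → X ≤ c * p ^ ((1 : ℝ)/2) * A ^ ((p - 2)/p) * B ^ ((2 : ℝ)/p)) :
    X ≤ 2 * Real.exp (1/2) * c * A * (Real.log (Real.exp 1 + B / A)) ^ ((1 : ℝ)/2) := by
  set L := log (exp 1 + B / A)
  have hBA : 0 ≤ B / A := by positivity
  have hL : 1 ≤ L := one_le_log_exp_one_add hBA
  have hp : (4 * L - 2) / (4 * L) = 1 - 2 / (4 * L) := by field_simp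
  have hBA_le : B / A ≤ exp L := by
    rw [exp_log (by positivity)]
    linarith [exp_pos 1]
  have hpow : (B / A) ^ (2 / (4 * L)) ≤ exp (1 / 2) := by
    refine (rpow_le_exp_mul_of_le_exp hBA hBA_le (by positivity)).trans_eq ?_
    congr 1
    field_simp
    ring
  calc X ≤ c * (4 * L) ^ ((1 : ℝ)/2) * A ^ ((4 * L - 2)/(4 * L)) * B ^ ((2 : ℝ)/(4 * L)) :=
        h (4 * L) (by linarith)
    _ = 2 * c * L ^ ((1 : ℝ)/2) * (A * (B / A) ^ (2 / (4 * L))) := by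
        rw [rpow_half_four_mul (by linarith), mul_assoc, hp, rpow_one_sub_mul_rpow hA hB.le]
        ring
    _ ≤ 2 * c * L ^ ((1 : ℝ)/2) * (A * exp (1 / 2)) := by gcongr
    _ = 2 * exp (1/2) * c * A * L ^ ((1 : ℝ)/2) := by ring

/-- If `X ≤ c p^{1/2} A^{(p-2)/p} B^{2/p}` for all `p ∈ [2, ∞)`, then
`X ≤ 2 e^{1/2} c A (log (e + B/A))^{1/2}` (Yudovich optimization over `p`). -/
theorem stmt1 (c A B X : ℝ) (hc : 0 ≤ c) (hA : 0 < A) (hB : 0 < B) (hX : 0 ≤ X)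
    (h : ∀ p : ℝ, 2 ≤ p → X ≤ c * p ^ ((1 : ℝ)/2) * A ^ ((p - 2)/p) * B ^ ((2 : ℝ)/p)) :
    X ≤ 2 * Real.exp (1/2) * c * A * (Real.log (Real.exp 1 + B / A)) ^ ((1 : ℝ)/2) :=
  stmt1_general c A B X hc hA hB h
end

section
/- Let T > 0, let Z : [0, T] → ℝ be differentiable with Z(t) ≥ e for every t ∈ [0, T], and let m : [0, T] → ℝ be nonnegative and integrable such that Z'(t) ≤ m(t) · Z(t) · log Z(t) for every t ∈ [0, T]. Then for every t ∈ [0, T] one has Z(t) ≤ Z(0)^{exp(∫₀ᵗ m(s) ds)}. -/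
open MeasureTheory Real Set

/-!
Along the solution, `W = log (log Z)` satisfies `W' = Z' / (Z log Z) ≤ m`, so integrating gives
`log (log Z t) ≤ log (log Z 0) + ∫₀ᵗ m`; exponentiating twice yields `Z t ≤ Z 0 ^ exp (∫₀ᵗ m)`.
-/

theorem HasDerivAt.log_log {Z : ℝ → ℝ} {z x : ℝ} (hZ : HasDerivAt Z z x) (hx : 1 < Z x) :
    HasDerivAt (fun y => Real.log (Real.log (Z y))) (z / Z x / Real.log (Z x)) x :=
  (hZ.log (by positivity)).log (log_pos hx).ne'

theorem le_rpow_exp_of_log_log_le {x y I : ℝ} (hx : 1 < x) (hy : 1 < y)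
    (h : log (log y) ≤ log (log x) + I) : y ≤ x ^ exp I := by
  have hlog : log y ≤ log x * exp I := by
    simpa only [exp_add, exp_log (log_pos hx), exp_log (log_pos hy)] using exp_le_exp.2 h
  calc y = exp (log y) := (exp_log (by positivity)).symm
    _ ≤ exp (log x * exp I) := exp_le_exp.2 hlog
    _ = x ^ exp I := (rpow_def_of_pos (by positivity) _).symm

theorem log_log_sub_le_integral_of_deriv_le_mul_log {a b : ℝ} (hab : a ≤ b) {Z Z' m : ℝ → ℝ}
    (hZ : ∀ t ∈ Icc a b, HasDerivAt Z (Z' t) t) (hZ1 : ∀ t ∈ Icc a b, 1 < Z t)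
    (hm : IntegrableOn m (Icc a b)) (hineq : ∀ t ∈ Icc a b, Z' t ≤ m t * Z t * log (Z t)) :
    log (log (Z b)) - log (log (Z a)) ≤ ∫ s in a..b, m s := by
  have hW : ∀ t ∈ Icc a b,
      HasDerivAt (fun y => log (log (Z y))) (Z' t / Z t / log (Z t)) t :=
    fun t ht => HasDerivAt.log_log (hZ t ht) (hZ1 t ht)
  refine intervalIntegral.sub_le_integral_of_hasDeriv_right_of_le hab
    (fun t ht => (hW t ht).continuousAt.continuousWithinAt)
    (fun t ht => (hW t (Ioo_subset_Icc_self ht)).hasDerivWithinAt) hm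
    (fun t ht => ?_)
  have ht' := Ioo_subset_Icc_self ht
  have hZpos : 0 < Z t := zero_lt_one.trans (hZ1 t ht')
  rw [div_le_iff₀ (log_pos (hZ1 t ht')), div_le_iff₀ hZpos]
  linarith [hineq t ht']

theorem le_rpow_exp_integral_of_deriv_le_mul_log {a b : ℝ} (hab : a ≤ b) {Z Z' m : ℝ → ℝ}
    (hZ : ∀ t ∈ Icc a b, HasDerivAt Z (Z' t) t) (hZ1 : ∀ t ∈ Icc a b, 1 < Z t)
    (hm : IntegrableOn m (Icc a b)) (hineq : ∀ t ∈ Icc a b, Z' t ≤ m t * Z t * log (Z t)) :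
    Z b ≤ Z a ^ exp (∫ s in a..b, m s) := by
  have h := log_log_sub_le_integral_of_deriv_le_mul_log hab hZ hZ1 hm hineq
  exact le_rpow_exp_of_log_log_le (hZ1 a (left_mem_Icc.2 hab)) (hZ1 b (right_mem_Icc.2 hab))
    (by linarith)

theorem stmt12_general (T : ℝ) (Z Z' m : ℝ → ℝ)
    (hZdiff : ∀ t ∈ Set.Icc (0 : ℝ) T, HasDerivAt Z (Z' t) t)
    (hZe : ∀ t ∈ Set.Icc (0 : ℝ) T, Real.exp 1 ≤ Z t)
    (hmint : IntegrableOn m (Set.Icc (0 : ℝ) T))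
    (hineq : ∀ t ∈ Set.Icc (0 : ℝ) T, Z' t ≤ m t * Z t * Real.log (Z t)) :
    ∀ t ∈ Set.Icc (0 : ℝ) T, Z t ≤ Z 0 ^ Real.exp (∫ s in (0 : ℝ)..t, m s) := by
  intro t ht
  have hsub : Icc 0 t ⊆ Icc 0 T := Icc_subset_Icc le_rfl ht.2
  exact le_rpow_exp_integral_of_deriv_le_mul_log ht.1 (fun s hs => hZdiff s (hsub hs))
    (fun s hs => one_lt_exp_iff.2 one_pos |>.trans_le (hZe s (hsub hs))) (hmint.mono_set hsub)
    (fun s hs => hineq s (hsub hs))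

/-- Logarithmic Gronwall lemma: if `Z` is differentiable on `[0, T]` with
`Z ≥ e` and `Z' ≤ m Z log Z` on `[0, T]`, where `m ≥ 0` is integrable on
`[0, T]`, then `Z(t) ≤ Z(0)^{exp(∫₀ᵗ m)}` for every `t ∈ [0, T]`. -/
theorem stmt12 (T : ℝ) (hT : 0 < T) (Z Z' m : ℝ → ℝ)
    (hZdiff : ∀ t ∈ Set.Icc (0 : ℝ) T, HasDerivAt Z (Z' t) t)
    (hZe : ∀ t ∈ Set.Icc (0 : ℝ) T, Real.exp 1 ≤ Z t)
    (hm0 : ∀ t ∈ Set.Icc (0 : ℝ) T, 0 ≤ m t)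
    (hmint : IntegrableOn m (Set.Icc (0 : ℝ) T))
    (hineq : ∀ t ∈ Set.Icc (0 : ℝ) T, Z' t ≤ m t * Z t * Real.log (Z t)) :
    ∀ t ∈ Set.Icc (0 : ℝ) T, Z t ≤ Z 0 ^ Real.exp (∫ s in (0 : ℝ)..t, m s) :=
  stmt12_general T Z Z' m hZdiff hZe hmint hineq
end
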